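/- Fourth-order compact (HODIE) quadrature identity: there is an absolute constant C such that for every h > 0, every x ∈ ℝ, and every six times continuously differentiable function g : [x−h, x+h] → ℝ, | (g(x−h) − 2g(x) + g(x+h))/h² − ( (1/12)g''(x−h) + (5/6)g''(x) + (1/12)g''(x+h) ) | ≤ C h⁴ · max_{y ∈ [x−h, x+h]} |g⁽⁶⁾(y)|. -/

import Mathlib

/-!
Expand `g` to order five and `g''` to order three around the left endpoint `x - h`. The scheme
is exact on quintics, so applied to the Taylor polynomials it vanishes, and the error is that of
the scheme applied to the two Taylor remainders, which are `O(h⁶)` and `O(h⁴)` respectively.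
-/

open Set

section IteratedDerivWithin

variable {𝕜 F : Type*} [NontriviallyNormedField 𝕜] [NormedAddCommGroup F] [NormedSpace 𝕜 F]
  {f : 𝕜 → F} {s : Set 𝕜}

theorem iteratedDerivWithin_iteratedDerivWithin (k m : ℕ) :
    iteratedDerivWithin k (iteratedDerivWithin m f s) s = iteratedDerivWithin (k + m) f s := by
  have hm : iteratedDerivWithin m f s = (fun u => derivWithin u s)^[m] f :=
    funext fun _ => iteratedDerivWithin_eq_iterate
  ext y
  rw [hm, iteratedDerivWithin_eq_iterate, iteratedDerivWithin_eq_iterate,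
    Function.iterate_add_apply]

theorem ContDiffOn.iteratedDerivWithin {n m : WithTop ℕ∞} {k : ℕ} (hf : ContDiffOn 𝕜 n f s)
    (hs : UniqueDiffOn 𝕜 s) (hmn : m + k ≤ n) :
    ContDiffOn 𝕜 m (iteratedDerivWithin k f s) s := by
  induction k generalizing f n with
  | zero => simpa using hf.of_le (by simpa using hmn)
  | succ k ih =>
    rw [iteratedDerivWithin_succ']
    refine ih (hf.derivWithin hs (m := m + k) ?_) le_rfl
    simpa [add_assoc] using hmn

end IteratedDerivWithin

/-- `f` stands for `g''`. -/
noncomputable def compactSchemeError (g f : ℝ → ℝ) (x h : ℝ) : ℝ :=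
  (g (x - h) - 2 * g x + g (x + h)) / h ^ 2
    - (1 / 12 * f (x - h) + 5 / 6 * f x + 1 / 12 * f (x + h))

theorem compactSchemeError_sub (g₁ g₂ f₁ f₂ : ℝ → ℝ) (x h : ℝ) :
    compactSchemeError (g₁ - g₂) (f₁ - f₂) x h =
      compactSchemeError g₁ f₁ x h - compactSchemeError g₂ f₂ x h := by
  simp only [compactSchemeError, Pi.sub_apply]
  ring

theorem compactSchemeError_taylorWithinEval_eq_zero {g f : ℝ → ℝ} {s : Set ℝ} {x h : ℝ}
    (hh : h ≠ 0)
    (hfg : ∀ k < 4, iteratedDerivWithin k f s (x - h) = iteratedDerivWithin (k + 2) g s (x - h)) :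
    compactSchemeError (taylorWithinEval g 5 s (x - h)) (taylorWithinEval f 3 s (x - h)) x h =
      0 := by
  simp only [compactSchemeError, taylor_within_apply, Finset.sum_range_succ, Finset.sum_range_zero,
    smul_eq_mul, hfg 0 (by norm_num), hfg 1 (by norm_num), hfg 2 (by norm_num),
    hfg 3 (by norm_num)]
  norm_num [Nat.factorial]
  field_simp
  ring

theorem abs_compactSchemeError_le {g f : ℝ → ℝ} {x h A B : ℝ} (hh : 0 < h)
    (hg : ∀ t ∈ Icc (x - h) (x + h), |g t| ≤ A * (t - (x - h)) ^ 6)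
    (hf : ∀ t ∈ Icc (x - h) (x + h), |f t| ≤ B * (t - (x - h)) ^ 4) :
    |compactSchemeError g f x h| ≤ (66 * A + 13 / 6 * B) * h ^ 4 := by
  have hl : x - h ∈ Icc (x - h) (x + h) := ⟨le_rfl, by linarith⟩
  have hc : x ∈ Icc (x - h) (x + h) := ⟨by linarith, by linarith⟩
  have hr : x + h ∈ Icc (x - h) (x + h) := ⟨by linarith, le_rfl⟩
  have hg₀ : g (x - h) = 0 := abs_nonpos_iff.mp (by simpa using hg _ hl)
  have hf₀ : f (x - h) = 0 := abs_nonpos_iff.mp (by simpa using hf _ hl)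
  have h2h : x + h - (x - h) = 2 * h := by ring
  have hh2 : 0 < h ^ 2 := by positivity
  have hg₁ : |g x / h ^ 2| ≤ A * h ^ 4 := by
    rw [abs_div, abs_of_pos hh2, div_le_iff₀ hh2]
    have := hg _ hc
    rw [sub_sub_cancel] at this
    linarith
  have hg₂ : |g (x + h) / h ^ 2| ≤ 64 * A * h ^ 4 := by
    rw [abs_div, abs_of_pos hh2, div_le_iff₀ hh2]
    have := hg _ hr
    rw [h2h] at this
    linarith
  have hf₁ : |f x| ≤ B * h ^ 4 := by simpa using hf _ hc
  have hf₂ : |f (x + h)| ≤ 16 * B * h ^ 4 := by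
    have := hf _ hr
    rw [h2h] at this
    linarith
  have hexpand : compactSchemeError g f x h =
      -2 * (g x / h ^ 2) + g (x + h) / h ^ 2 - (5 / 6 * f x + 1 / 12 * f (x + h)) := by
    rw [compactSchemeError, hg₀, hf₀]
    ring
  rw [hexpand, abs_le]
  rw [abs_le] at hg₁ hg₂ hf₁ hf₂
  constructor <;> linarith [hg₁.1, hg₁.2, hg₂.1, hg₂.2, hf₁.1, hf₁.2, hf₂.1, hf₂.2]

theorem stmt_19 :
    ∃ C : ℝ, ∀ h : ℝ, 0 < h → ∀ x : ℝ, ∀ g : ℝ → ℝ,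
      ContDiffOn ℝ 6 g (Set.Icc (x - h) (x + h)) →
      ∀ Mg : ℝ,
        (∀ y ∈ Set.Icc (x - h) (x + h),
          |iteratedDerivWithin 6 g (Set.Icc (x - h) (x + h)) y| ≤ Mg) →
        |(g (x - h) - 2 * g x + g (x + h)) / h^2
            - ((1/12) * iteratedDerivWithin 2 g (Set.Icc (x - h) (x + h)) (x - h)
              + (5/6) * iteratedDerivWithin 2 g (Set.Icc (x - h) (x + h)) x
              + (1/12) * iteratedDerivWithin 2 g (Set.Icc (x - h) (x + h)) (x + h))|
          ≤ C * h^4 * Mg := by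
  refine ⟨41 / 45, fun h hh x g hg M hM => ?_⟩
  set s := Icc (x - h) (x + h)
  set f := iteratedDerivWithin 2 g s
  have hxh : x - h ≤ x + h := by linarith
  have hs : UniqueDiffOn ℝ s := uniqueDiffOn_Icc (by linarith)
  have hf : ContDiffOn ℝ 4 f s := hg.iteratedDerivWithin hs (by norm_num)
  have hf' : ∀ k, iteratedDerivWithin k f s = iteratedDerivWithin (k + 2) g s :=
    fun k => iteratedDerivWithin_iteratedDerivWithin k 2
  have hg_rem :
      ∀ t ∈ s, |(g - taylorWithinEval g 5 s (x - h)) t| ≤ M / 120 * (t - (x - h)) ^ 6 :=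
    fun t ht => (taylor_mean_remainder_bound (n := 5) hxh hg ht hM).trans_eq (by
      norm_num [Nat.factorial]; ring)
  have hf_rem :
      ∀ t ∈ s, |(f - taylorWithinEval f 3 s (x - h)) t| ≤ M / 6 * (t - (x - h)) ^ 4 :=
    fun t ht => (taylor_mean_remainder_bound (n := 3) hxh hf ht
      (fun y hy => (hf' 4 ▸ hM y hy))).trans_eq (by norm_num [Nat.factorial]; ring)
  change |compactSchemeError g f x h| ≤ _
  calc |compactSchemeError g f x h|
      = |compactSchemeError (g - taylorWithinEval g 5 s (x - h))
          (f - taylorWithinEval f 3 s (x - h)) x h| := by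
        rw [compactSchemeError_sub,
          compactSchemeError_taylorWithinEval_eq_zero hh.ne' (fun k _ => by rw [hf']), sub_zero]
    _ ≤ (66 * (M / 120) + 13 / 6 * (M / 6)) * h ^ 4 := abs_compactSchemeError_le hh hg_rem hf_rem
    _ = 41 / 45 * h ^ 4 * M := by ring
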